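/- arXiv:1610.05093 — 5 statements merged into one kernel-verified Lean document; each statement's English description precedes it below -/
import Mathlib

section
/- A finite simple graph F whose vertex set is a set of distinct positive integers is an increasing forest if and only if F contains no two distinct edges ik and jk with i < k and j < k (i ≠ j). -/
/-- A simple graph `F` on a linearly ordered vertex type is an *increasing forest*
if it is acyclic and, rooting each connected component at its minimum vertex,
the vertex labels strictly increase along every path starting at a root. -/
def IsIncreasingForest {V : Type*} [LinearOrder V] (F : SimpleGraph V) : Prop :=
  F.IsAcyclic ∧ ∀ (r v : V), (∀ w, F.Reachable r w → r ≤ w) →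
    ∀ p : F.Walk r v, p.IsPath → p.support.Chain' (· < ·)

/-!
If a vertex `k` had two smaller neighbours `i ≠ j`, the increasing paths from the root of the
component of `k` to `i` and to `j` would avoid `k`; extended by `k` they give two different paths
from the root to `k`, which is impossible in a forest. Conversely, if no vertex has two smaller
neighbours, then the largest vertex of a cycle would have two, and a path that leaves the root
upwards can never turn downwards, because the turning vertex would have two smaller neighbours.
-/

namespace SimpleGraph

variable {V : Type*} [LinearOrder V] {G : SimpleGraph V}

lemma Walk.le_end_of_mem_support_of_isChain {u v w : V} {p : G.Walk u v}
    (hp : p.support.IsChain (· < ·)) (hw : w ∈ p.support) : w ≤ v := by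
  have := (List.isChain_iff_pairwise.mp hp).imp le_of_lt |>.rel_getLast hw
  rwa [Walk.getLast_support] at this

lemma exists_reachable_forall_reachable_le [WellFoundedLT V] (v : V) :
    ∃ r, G.Reachable v r ∧ ∀ w, G.Reachable r w → r ≤ w := by
  obtain ⟨r, hvr, hmin⟩ := wellFounded_lt.has_min {w | G.Reachable v w} ⟨v, .rfl⟩
  exact ⟨r, hvr, fun w hrw ↦ not_lt.mp (hmin w (hvr.trans hrw))⟩

lemma isAcyclic_of_forall_subsingleton_lower_adj
    (hG : ∀ k, {i | i < k ∧ G.Adj i k}.Subsingleton) : G.IsAcyclic := by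
  classical
  intro u c hc
  obtain ⟨m, hm, hmax⟩ := c.support.toFinset.exists_max_image id ⟨u, by simp⟩
  simp only [List.mem_toFinset, id] at hm hmax
  set c' := c.rotate m hm
  have hc' : c'.IsCycle := hc.rotate hm
  have hlt : ∀ x ∈ c'.support, G.Adj x m → x < m := fun x hx hadj ↦
    (hmax x ((c.mem_support_rotate_iff m hm).mp hx)).lt_of_ne hadj.ne
  exact hc'.snd_ne_penultimate <| hG m
    ⟨hlt _ (c'.getVert_mem_support 1) (c'.adj_snd hc'.not_nil).symm,
      (c'.adj_snd hc'.not_nil).symm⟩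
    ⟨hlt _ (c'.getVert_mem_support _) (c'.adj_penultimate hc'.not_nil),
      c'.adj_penultimate hc'.not_nil⟩

lemma Walk.IsPath.isChain_lt_support (hG : ∀ k, {i | i < k ∧ G.Adj i k}.Subsingleton)
    {u v : V} {p : G.Walk u v} (hp : p.IsPath) (hu : u ≤ p.snd) :
    p.support.IsChain (· < ·) := by
  induction p with
  | nil => exact List.isChain_singleton _
  | @cons a b w hab q ih =>
    have hab' : a < b := (snd_cons q hab ▸ hu).lt_of_ne hab.ne
    have hpath := (Walk.cons_isPath_iff _ _).mp hp
    cases q with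
    | nil => exact List.isChain_pair.mpr hab'
    | @cons _ c _ hbc q =>
      have hbc' : b ≤ c := by
        by_contra! hcb
        exact hpath.2 (hG b ⟨hcb, hbc.symm⟩ ⟨hab', hab⟩ ▸ by simp)
      exact .cons_cons hab' (ih hpath.1 (by rwa [snd_cons]))

end SimpleGraph

open SimpleGraph

section

variable {V : Type*} [LinearOrder V] {G : SimpleGraph V}

lemma IsIncreasingForest.subsingleton_lower_adj [WellFoundedLT V] (hG : IsIncreasingForest G)
    (k : V) : {i | i < k ∧ G.Adj i k}.Subsingleton := by
  classical
  obtain ⟨hacyc, hinc⟩ := hG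
  obtain ⟨r, hkr, hmin⟩ := exists_reachable_forall_reachable_le (G := G) k
  have descent :
      ∀ x ∈ {i | i < k ∧ G.Adj i k}, ∃ p : G.Walk k r, p.IsPath ∧ p.snd = x := by
    rintro x ⟨hxk, hx⟩
    obtain ⟨q, hq⟩ := (hkr.symm.trans hx.symm.reachable).some.toPath
    have hk : k ∉ q.support := fun hk ↦
      (Walk.le_end_of_mem_support_of_isChain (hinc r x hmin q hq) hk).not_gt hxk
    exact ⟨.cons hx.symm q.reverse, (Walk.cons_isPath_iff _ _).mpr ⟨hq.reverse, by simpa⟩,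
      Walk.snd_cons _ _⟩
  rintro i hi j hj
  obtain ⟨p, hp, rfl⟩ := descent i hi
  obtain ⟨p', hp', rfl⟩ := descent j hj
  exact congrArg (fun q : G.Path k r ↦ q.1.snd)
    ((hacyc.subsingleton_path k r).elim ⟨p, hp⟩ ⟨p', hp'⟩)

lemma isIncreasingForest_of_forall_subsingleton_lower_adj
    (hG : ∀ k, {i | i < k ∧ G.Adj i k}.Subsingleton) : IsIncreasingForest G :=
  ⟨isAcyclic_of_forall_subsingleton_lower_adj hG, fun _ _ hmin _ hp ↦
    hp.isChain_lt_support hG (hmin _ (Walk.take _ 1).reachable)⟩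

theorem isIncreasingForest_iff_forall_subsingleton_lower_adj [WellFoundedLT V] :
    IsIncreasingForest G ↔ ∀ k, {i | i < k ∧ G.Adj i k}.Subsingleton :=
  ⟨IsIncreasingForest.subsingleton_lower_adj,
    isIncreasingForest_of_forall_subsingleton_lower_adj⟩

end

theorem stmt_0_general (V : Finset ℕ) (F : SimpleGraph {x // x ∈ V}) :
    IsIncreasingForest F ↔
      ¬ ∃ i j k : {x // x ∈ V}, i < k ∧ j < k ∧ i ≠ j ∧ F.Adj i k ∧ F.Adj j k := by
  rw [isIncreasingForest_iff_forall_subsingleton_lower_adj]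
  constructor
  · rintro hF ⟨i, j, k, hik, hjk, hij, hi, hj⟩
    exact hij (hF k ⟨hik, hi⟩ ⟨hjk, hj⟩)
  · rintro hF k i ⟨hik, hi⟩ j ⟨hjk, hj⟩
    by_contra hij
    exact hF ⟨i, j, k, hik, hjk, hij, hi, hj⟩

theorem stmt_0 (V : Finset ℕ) (hpos : ∀ v ∈ V, 0 < v) (F : SimpleGraph {x // x ∈ V}) :
    IsIncreasingForest F ↔
      ¬ ∃ i j k : {x // x ∈ V}, i < k ∧ j < k ∧ i ≠ j ∧ F.Adj i k ∧ F.Adj j k :=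
  stmt_0_general V F
end

section
/- Let G be a finite simple graph with vertex set [n] = {1,...,n}. Then in ℤ[t] one has ∑_{m≥0} isf_m(G) · t^{n−m} = ∏_{k=1}^{n} (t + |E_k(G)|). -/
open Polynomial Classical

/-- `F` is an increasing spanning forest of `G`: a set of edges of `G` whose
spanning subgraph is an increasing forest. -/
def IsISF {n : ℕ} (G : SimpleGraph (Fin n)) (F : Finset (Sym2 (Fin n))) : Prop :=
  (F : Set (Sym2 (Fin n))) ⊆ G.edgeSet ∧
    IsIncreasingForest (SimpleGraph.fromEdgeSet (F : Set (Sym2 (Fin n))))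

/-- The number of increasing spanning forests of `G` with `m` edges. -/
noncomputable def isf {n : ℕ} (G : SimpleGraph (Fin n)) (m : ℕ) : ℕ :=
  ((Finset.univ : Finset (Finset (Sym2 (Fin n)))).filter
    (fun F => IsISF G F ∧ F.card = m)).card

/-- The set of edges of `G` whose larger endpoint is `k`. -/
noncomputable def Ek {n : ℕ} (G : SimpleGraph (Fin n)) (k : Fin n) : Finset (Sym2 (Fin n)) :=
  Finset.univ.filter (fun e => e ∈ G.edgeSet ∧ ∃ j : Fin n, j < k ∧ e = s(j, k))

/-!
A vertex `u` of an increasing forest has at most one lower neighbour: for two of them, `a` and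
`b`, the increasing paths from the root of the component to `a` and to `b` avoid `u`, and
extended by `u` they give two paths between the same vertices. Conversely, if every vertex has at
most one lower neighbour, the largest vertex of a cycle would have two, and a path starting at a
root can never step down, since the vertex it would step down from already uses its lower
neighbour to arrive there. So the ISFs of `G` are the sets of edges no two of which share their
larger endpoint, an ISF with `m` edges is a choice of `m` vertices `k` together with an edge of
`E_k(G)` for each, and `isf_m(G)` is the `m`-th elementary symmetric function of the `|E_k(G)|`:
the coefficient of `t^(n-m)` in `∏ (t + |E_k(G)|)`.
-/

namespace Sym2

variable {α : Type*} [LinearOrder α]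

theorem mk_inf_sup (e : Sym2 α) : s(e.inf, e.sup) = e :=
  sortEquiv.symm_apply_apply e

theorem inf_lt_sup_iff {e : Sym2 α} : e.inf < e.sup ↔ ¬e.IsDiag := by
  induction e with | _ a b => simp [eq_comm]

end Sym2

namespace SimpleGraph

variable {V : Type*} [LinearOrder V] {H : SimpleGraph V}

def AtMostOneLowerNeighbor (H : SimpleGraph V) : Prop :=
  ∀ ⦃u a b : V⦄, H.Adj u a → H.Adj u b → a < u → b < u → a = b

theorem Walk.le_of_mem_support_of_isChain {u v w : V} (p : H.Walk u v)
    (hp : p.support.IsChain (· < ·)) (hw : w ∈ p.support) : w ≤ v := by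
  induction p generalizing w with
  | nil => simp_all
  | cons h q ih =>
    rw [support_cons, List.mem_cons] at hw
    rw [support_cons, ← cons_tail_support, List.isChain_cons_cons, cons_tail_support] at hp
    rcases hw with rfl | hw
    · exact hp.1.le.trans (ih hp.2 q.start_mem_support)
    · exact ih hp.2 hw

namespace AtMostOneLowerNeighbor

theorem isAcyclic (hH : H.AtMostOneLowerNeighbor) : H.IsAcyclic := by
  classical
  intro v c hc
  obtain ⟨u, hu, hmax⟩ := c.support.toFinset.exists_max_image id ⟨v, by simp⟩
  rw [List.mem_toFinset] at hu
  set c' := c.rotate u hu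
  have hc' : c'.IsCycle := hc.rotate hu
  have hlt : ∀ w ∈ c'.support, H.Adj u w → w < u := fun w hw huw =>
    lt_of_le_of_ne (hmax w (by simpa [c'] using hw)) huw.ne.symm
  exact hc'.snd_ne_penultimate <| hH (c'.adj_snd hc'.not_nil) (c'.adj_penultimate hc'.not_nil).symm
    (hlt _ (c'.getVert_mem_support _) (c'.adj_snd hc'.not_nil))
    (hlt _ (c'.getVert_mem_support _) (c'.adj_penultimate hc'.not_nil).symm)

theorem isChain_cons_support (hH : H.AtMostOneLowerNeighbor) {u v a : V} (p : H.Walk u v)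
    (hp : p.IsPath) (hua : H.Adj u a) (hau : a < u) (ha : a ∉ p.support) :
    (a :: p.support).IsChain (· < ·) := by
  induction p generalizing a with
  | nil => simpa using hau
  | @cons u c _ huc q ih =>
    have hcu : u < c := by
      refine lt_of_le_of_ne (le_of_not_gt fun hcu => ha ?_) huc.ne
      rw [hH hua huc hau hcu]
      simp
    rw [Walk.support_cons, List.isChain_cons_cons]
    exact ⟨hau, ih hp.of_cons huc.symm hcu ((Walk.cons_isPath_iff huc q).mp hp).2⟩

theorem isIncreasingForest (hH : H.AtMostOneLowerNeighbor) : IsIncreasingForest H := by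
  refine ⟨hH.isAcyclic, fun r v hroot p hp => ?_⟩
  cases p with
  | nil => exact List.isChain_singleton r
  | cons hrb q =>
    rw [Walk.support_cons]
    exact hH.isChain_cons_support q hp.of_cons hrb.symm
      (lt_of_le_of_ne (hroot _ hrb.reachable) hrb.ne) ((Walk.cons_isPath_iff hrb q).mp hp).2

end AtMostOneLowerNeighbor

theorem _root_.IsIncreasingForest.atMostOneLowerNeighbor [Finite V] (hH : IsIncreasingForest H) :
    H.AtMostOneLowerNeighbor := by
  intro u a b hua hub hau hbu
  obtain ⟨r, hur, hmin⟩ := Set.exists_min_image {w | H.Reachable u w} id (Set.toFinite _)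
    ⟨u, Reachable.refl u⟩
  have hroot : ∀ w, H.Reachable r w → r ≤ w := fun w hrw => hmin w (hur.trans hrw)
  have extend : ∀ x, H.Adj u x → x < u →
      ∃ p : H.Walk r x, ∃ hxu : H.Adj x u, (p.concat hxu).IsPath :=
    fun x hux hxu => by
      obtain ⟨p, hp⟩ := ((hur.symm.trans hux.reachable).some).toPath
      refine ⟨p, hux.symm, hp.concat (fun hu => ?_) hux.symm⟩
      exact (p.le_of_mem_support_of_isChain (hH.2 r x hroot p hp) hu).not_gt hxu
  obtain ⟨pa, _, hpa⟩ := extend a hua hau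
  obtain ⟨pb, _, hpb⟩ := extend b hub hbu
  have hsame := (hH.1.subsingleton_path r u).elim ⟨_, hpa⟩ ⟨_, hpb⟩
  exact (Walk.concat_inj (congrArg Subtype.val hsame)).1

theorem isIncreasingForest_iff_atMostOneLowerNeighbor [Finite V] :
    IsIncreasingForest H ↔ H.AtMostOneLowerNeighbor :=
  ⟨IsIncreasingForest.atMostOneLowerNeighbor, AtMostOneLowerNeighbor.isIncreasingForest⟩

theorem atMostOneLowerNeighbor_fromEdgeSet_iff {s : Set (Sym2 V)} (hs : ∀ e ∈ s, ¬e.IsDiag) :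
    (fromEdgeSet s).AtMostOneLowerNeighbor ↔ s.InjOn Sym2.sup := by
  constructor
  · intro hH e₁ he₁ e₂ he₂ hsup
    have hadj : ∀ e ∈ s, (fromEdgeSet s).Adj e.sup e.inf := fun e he =>
      ⟨show s(e.sup, e.inf) ∈ s by rwa [Sym2.eq_swap, Sym2.mk_inf_sup],
        (Sym2.inf_lt_sup_iff.mpr (hs e he)).ne'⟩
    have hinf := hH (hadj e₁ he₁) (hsup ▸ hadj e₂ he₂)
      (Sym2.inf_lt_sup_iff.mpr (hs e₁ he₁)) (hsup ▸ Sym2.inf_lt_sup_iff.mpr (hs e₂ he₂))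
    exact Sym2.inf_eq_inf_and_sup_eq_sup.mp ⟨hinf, hsup⟩
  · intro hinj u a b hua hub hau hbu
    have h := hinj hua.1 hub.1 (by simp [hau.le, hbu.le])
    exact Sym2.congr_right.mp h

end SimpleGraph

section IncreasingSpanningForest

open SimpleGraph Finset

variable {n : ℕ} {G : SimpleGraph (Fin n)}

theorem isISF_iff {F : Finset (Sym2 (Fin n))} :
    IsISF G F ↔
      (F : Set (Sym2 (Fin n))) ⊆ G.edgeSet ∧ Set.InjOn Sym2.sup (F : Set (Sym2 (Fin n))) :=
  and_congr_right fun hF => isIncreasingForest_iff_atMostOneLowerNeighbor.trans <|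
    atMostOneLowerNeighbor_fromEdgeSet_iff fun _ he => G.not_isDiag_of_mem_edgeSet (hF he)

theorem mem_Ek_iff {k : Fin n} {e : Sym2 (Fin n)} :
    e ∈ Ek G k ↔ e ∈ G.edgeSet ∧ e.sup = k := by
  simp only [Ek, mem_filter, mem_univ, true_and, and_congr_right_iff]
  intro he
  constructor
  · rintro ⟨j, hjk, rfl⟩
    simp [hjk.le]
  · rintro rfl
    exact ⟨e.inf, Sym2.inf_lt_sup_iff.mpr (G.not_isDiag_of_mem_edgeSet he),
      (Sym2.mk_inf_sup e).symm⟩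

theorem sup_eq_of_mem_pi_Ek {t : Finset (Fin n)} {f : ∀ k ∈ t, Sym2 (Fin n)}
    (hf : f ∈ t.pi (Ek G)) {k : Fin n} (hk : k ∈ t) : (f k hk).sup = k :=
  (mem_Ek_iff.mp (mem_pi.mp hf k hk)).2

theorem card_filter_isISF_image_sup_eq (G : SimpleGraph (Fin n)) (t : Finset (Fin n)) :
    (univ.filter fun F : Finset (Sym2 (Fin n)) => IsISF G F ∧ F.image Sym2.sup = t).card
      = ∏ k ∈ t, (Ek G k).card := by
  rw [← card_pi]
  symm
  refine card_bij (fun f _ => t.attach.image fun k => f k.1 k.2) ?_ ?_ ?_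
  · intro f hf
    have hsup : ∀ k hk, (f k hk).sup = k := fun _ => sup_eq_of_mem_pi_Ek hf
    simp only [mem_filter, mem_univ, true_and, isISF_iff]
    refine ⟨⟨?_, ?_⟩, ?_⟩
    · simp only [coe_image, Set.image_subset_iff]
      exact fun k _ => (mem_Ek_iff.mp (mem_pi.mp hf k.1 k.2)).1
    · simp only [coe_image, Set.InjOn, Set.mem_image, forall_exists_index, and_imp]
      rintro _ k - rfl _ l - rfl h
      rw [hsup, hsup] at h
      simp [Subtype.ext h]
    · ext k
      simp [hsup]
  · intro f hf g hg hfg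
    funext k hk
    obtain ⟨l, -, hl⟩ := mem_image.mp (hfg ▸ mem_image_of_mem _ (mem_attach t ⟨k, hk⟩) :
      f k hk ∈ t.attach.image fun k => g k.1 k.2)
    have hlk : l.1 = k := by rw [← sup_eq_of_mem_pi_Ek hg l.2, hl, sup_eq_of_mem_pi_Ek hf hk]
    subst hlk
    exact hl.symm
  · intro F hF
    simp only [mem_filter, mem_univ, true_and, isISF_iff] at hF
    obtain ⟨⟨hFG, hinj⟩, rfl⟩ := hF
    have hpick : ∀ k ∈ F.image Sym2.sup, ∃ e ∈ F, e.sup = k := fun k hk => mem_image.mp hk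
    choose f hfF hfk using hpick
    refine ⟨f, mem_pi.mpr fun k hk => mem_Ek_iff.mpr ⟨hFG (hfF k hk), hfk k hk⟩, ?_⟩
    ext e
    rw [mem_image]
    constructor
    · rintro ⟨⟨k, hk⟩, -, rfl⟩
      exact hfF k hk
    · intro he
      have hk := mem_image_of_mem Sym2.sup he
      exact ⟨⟨_, hk⟩, mem_attach _ _, hinj (hfF _ hk) he (hfk _ hk)⟩

theorem isf_eq_sum_powersetCard (G : SimpleGraph (Fin n)) (m : ℕ) :
    isf G m = ∑ t ∈ powersetCard m univ, ∏ k ∈ t, (Ek G k).card := by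
  rw [isf, card_eq_sum_card_fiberwise (f := fun F => F.image Sym2.sup) (t := powersetCard m univ)]
  · refine sum_congr rfl fun t ht => ?_
    rw [← card_filter_isISF_image_sup_eq, filter_filter]
    congr 1
    refine filter_congr fun F _ => ?_
    constructor
    · exact fun ⟨⟨hF, _⟩, himg⟩ => ⟨hF, himg⟩
    · rintro ⟨hF, rfl⟩
      rw [← (mem_powersetCard.mp ht).2, card_image_of_injOn (isISF_iff.mp hF).2]
      exact ⟨⟨hF, rfl⟩, rfl⟩
  · intro F hF
    obtain ⟨-, hISF, rfl⟩ := mem_filter.mp (mem_coe.mp hF)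
    exact mem_coe.mpr <|
      mem_powersetCard.mpr ⟨subset_univ _, card_image_of_injOn (isISF_iff.mp hISF).2⟩

end IncreasingSpanningForest

theorem stmt_1 {n : ℕ} (G : SimpleGraph (Fin n)) :
    ∑ m ∈ Finset.range (n + 1), (isf G m : Polynomial ℤ) * X ^ (n - m)
      = ∏ k : Fin n, (X + C ((Ek G k).card : ℤ)) := by
  have hprod : ∏ k : Fin n, (X + C ((Ek G k).card : ℤ))
      = ((Finset.univ.val.map fun k => ((Ek G k).card : ℤ)).map fun r => X + C r).prod := by
    rw [Multiset.map_map, Finset.prod_eq_multiset_prod]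
    rfl
  rw [hprod, Multiset.prod_X_add_C_eq_sum_esymm, Multiset.card_map, Finset.card_val,
    Finset.card_univ, Fintype.card_fin]
  refine Finset.sum_congr rfl fun m _ => ?_
  rw [Finset.esymm_map_val, isf_eq_sum_powersetCard]
  simp [map_sum, map_prod]
end

section
/- Let d ≥ 1 and let S be a nonempty cage-free family of (d+1)-element subsets of [n] = {1,...,n} (the facets of a pure d-dimensional cage-free simplicial complex). Then S has a leaf: there exists a d-element subset ρ of [n] that is contained in exactly one member of S. -/
/-- A family `S` of `(d+1)`-element subsets of `[n]` is *cage-free* if no two distinct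
members of `S` agree in their maximum element and in all their elements other than the
second largest, i.e. there are no two distinct members `[σ,i,k]_<` and `[σ,j,k]_<`. -/
def CageFreeFamily {n : ℕ} (S : Finset (Finset (Fin n))) : Prop :=
  ∀ (σ : Finset (Fin n)) (i j k : Fin n),
    (∀ x ∈ σ, x < i) → (∀ x ∈ σ, x < j) → i < k → j < k →
    insert i (insert k σ) ∈ S → insert j (insert k σ) ∈ S → i = j

theorem stmt_8 {n : ℕ} (d : ℕ) (hd : 1 ≤ d) (S : Finset (Finset (Fin n)))
    (hne : S.Nonempty) (hcard : ∀ φ ∈ S, φ.card = d + 1) (hcf : CageFreeFamily S) :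
    ∃ ρ : Finset (Fin n), ρ.card = d ∧ ∃! φ, φ ∈ S ∧ ρ ⊆ φ := by
  classical
  set f : Finset (Fin n) → ℕ := fun φ => φ.sup Fin.val with hf
  set m : ℕ := S.sup f with hm
  obtain ⟨φ0, hφ0S, hφ0sup⟩ := S.exists_mem_eq_sup hne f
  set T : Finset (Finset (Fin n)) := S.filter (fun φ => f φ = m) with hT
  have hTne : T.Nonempty := ⟨φ0, Finset.mem_filter.mpr ⟨hφ0S, hφ0sup.symm⟩⟩
  set g : Finset (Fin n) → ℕ := fun φ => (φ.filter (fun x => x.val < f φ)).sup Fin.val with hg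
  obtain ⟨φ, hφT, hφmin⟩ := T.exists_min_image g hTne
  have hφS : φ ∈ S := (Finset.mem_filter.mp hφT).1
  have hφm : f φ = m := (Finset.mem_filter.mp hφT).2
  have hcardφ : φ.card = d + 1 := hcard φ hφS
  have hφne : φ.Nonempty := Finset.card_pos.mp (by omega)
  set k : Fin n := φ.max' hφne with hk
  have hkφ : k ∈ φ := φ.max'_mem hφne
  have hkmax : ∀ x ∈ φ, x ≤ k := fun x hx => φ.le_max' x hx
  have hsupφ : f φ = k.val := by
    apply le_antisymm
    · exact Finset.sup_le fun x hx => hkmax x hx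
    · exact Finset.le_sup hkφ
  have herasene : (φ.erase k).Nonempty := by
    rw [← Finset.card_pos, Finset.card_erase_of_mem hkφ, hcardφ]; omega
  set j : Fin n := (φ.erase k).max' herasene with hj
  have hjek : j ∈ φ.erase k := Finset.max'_mem _ _
  have hjφ : j ∈ φ := Finset.mem_of_mem_erase hjek
  have hjk : j ≠ k := Finset.ne_of_mem_erase hjek
  have hjltk : j < k := lt_of_le_of_ne (hkmax j hjφ) hjk
  set σ : Finset (Fin n) := (φ.erase k).erase j with hσ
  have hσlt : ∀ x ∈ σ, x < j := fun x hx =>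
    lt_of_le_of_ne (Finset.le_max' _ x (Finset.mem_of_mem_erase hx)) (Finset.ne_of_mem_erase hx)
  have hσltk : ∀ x ∈ σ, x < k := fun x hx => (hσlt x hx).trans hjltk
  have hkej : k ∈ φ.erase j := Finset.mem_erase.mpr ⟨fun h => hjk h.symm, hkφ⟩
  have hρdef : φ.erase j = insert k σ := by
    rw [hσ, Finset.erase_right_comm]
    exact (Finset.insert_erase hkej).symm
  have hφeq : φ = insert j (insert k σ) := by
    rw [← hρdef, Finset.insert_erase hjφ]
  set ρ : Finset (Fin n) := φ.erase j with hρ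
  have hρcard : ρ.card = d := by rw [hρ, Finset.card_erase_of_mem hjφ, hcardφ]; omega
  -- g φ = j.val
  have hfilterφ : φ.filter (fun x => x.val < f φ) = φ.erase k := by
    ext x
    simp only [Finset.mem_filter, Finset.mem_erase, hsupφ]
    constructor
    · rintro ⟨hx, hlt⟩; exact ⟨fun h => by simp [h] at hlt, hx⟩
    · rintro ⟨hne', hx⟩
      exact ⟨hx, lt_of_le_of_ne ((hkmax x hx : x ≤ k)) (fun h => hne' (Fin.val_injective h))⟩
  have hgφ : g φ = j.val := by
    rw [hg]; simp only []
    rw [hfilterφ]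
    apply le_antisymm
    · exact Finset.sup_le fun x hx => Finset.le_max' _ x hx
    · exact Finset.le_sup hjek
  refine ⟨ρ, hρcard, φ, ⟨hφS, Finset.erase_subset _ _⟩, ?_⟩
  rintro ψ ⟨hψS, hρψ⟩
  have hcardψ : ψ.card = d + 1 := hcard ψ hψS
  have hssub : ρ ⊂ ψ := hρψ.ssubset_of_ne (fun h => by
    rw [← h, hρcard] at hcardψ; omega)
  obtain ⟨j', hj'ψ, hj'ρ⟩ := Finset.exists_of_ssubset hssub
  have hψeq : ψ = insert j' ρ := by
    refine (Finset.eq_of_subset_of_card_le ?_ ?_).symm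
    · exact Finset.insert_subset hj'ψ hρψ
    · rw [Finset.card_insert_of_notMem hj'ρ, hρcard, hcardψ]
  have hkρ : k ∈ ρ := hkej
  have hσρ : σ ⊆ ρ := by rw [hρdef]; exact Finset.subset_insert _ _
  have hj'k : j' ≠ k := fun h => hj'ρ (h ▸ hkρ)
  -- j' < k
  have hj'ltk : j' < k := by
    rcases lt_or_gt_of_ne hj'k with h | h
    · exact h
    · exfalso
      have h1 : f ψ ≤ m := Finset.le_sup hψS
      have h2 : (j' : ℕ) ≤ f ψ := Finset.le_sup hj'ψ
      have h3 : (k : ℕ) < (j' : ℕ) := h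
      omega
  suffices hjj : j' = j by rw [hψeq, hjj, hρ, Finset.insert_erase hjφ]
  by_cases hall : ∀ x ∈ σ, x < j'
  · apply hcf σ j' j k hall hσlt hj'ltk hjltk
    · rw [← hρdef, ← hψeq]; exact hψS
    · rw [← hφeq]; exact hφS
  · exfalso
    push_neg at hall
    obtain ⟨x, hxσ, hxge⟩ := hall
    have hj'x : j' < x := lt_of_le_of_ne hxge (fun h => hj'ρ (h ▸ hσρ hxσ))
    -- f ψ = m
    have hψsub : ψ = insert j' (insert k σ) := by rw [hψeq, hρdef]
    have hfψ : f ψ = k.val := by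
      apply le_antisymm
      · apply Finset.sup_le
        intro y hy
        rw [hψsub] at hy
        rcases Finset.mem_insert.mp hy with rfl | hy
        · exact le_of_lt hj'ltk
        · rcases Finset.mem_insert.mp hy with rfl | hy
          · exact le_refl _
          · exact le_of_lt (hσltk y hy)
      · exact Finset.le_sup (hρψ hkρ)
    have hψT : ψ ∈ T := Finset.mem_filter.mpr ⟨hψS, by rw [hfψ, ← hsupφ, hφm]⟩
    have hmin := hφmin ψ hψT
    -- compute g ψ
    have hfilterψ : ψ.filter (fun y => y.val < f ψ) = insert j' σ := by
      ext y
      simp only [Finset.mem_filter, hfψ, Finset.mem_insert]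
      constructor
      · rintro ⟨hy, hlt⟩
        rw [hψsub] at hy
        rcases Finset.mem_insert.mp hy with rfl | hy
        · exact Or.inl rfl
        · rcases Finset.mem_insert.mp hy with rfl | hy
          · omega
          · exact Or.inr hy
      · rintro (rfl | hy)
        · exact ⟨hj'ψ, hj'ltk⟩
        · exact ⟨hρψ (hσρ hy), hσltk y hy⟩
    have hgψ : g ψ < j.val := by
      rw [hg]; simp only []
      rw [hfilterψ]
      have hjpos : (⊥ : ℕ) < j.val := by
        have h1 : (j' : ℕ) < (x : ℕ) := hj'x
        have h2 : (x : ℕ) < (j : ℕ) := hσlt x hxσ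
        exact lt_of_le_of_lt (Nat.zero_le _) h2
      apply (Finset.sup_lt_iff hjpos).mpr
      intro y hy
      rcases Finset.mem_insert.mp hy with rfl | hy
      · exact hj'x.trans (hσlt x hxσ)
      · exact hσlt y hy
    rw [hgφ] at hmin
    omega
end

section
/- Let Δ be a pure d-dimensional simplicial complex (d ≥ 1) on vertex set [n] = {1,...,n}. If the labeling 1,...,n is a perfect elimination ordering of Δ, then there exists a (d−1)-element face σ of Δ (a peak) whose link graph — the simple graph on the vertices not in σ with an edge ij whenever σ ∪ {i,j} is a face of Δ — is chordal, i.e., every cycle of length at least 4 in it has a chord. -/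
/-!
Take `σ` to be the colex-smallest `(d-1)`-face of `Δ`. If `σ ∪ {i, k}` is a face and some
`x ∈ σ` exceeds `i`, exchanging `x` for `i` gives a colex-smaller `(d-1)`-face; hence every
edge of the link of `σ` lies above `σ`, and the PEO condition at `σ` says exactly that the
labeling is a perfect elimination ordering of the link graph. Such a graph is chordal: on a
cycle of length at least 4, the two cycle-neighbours of its largest vertex are adjacent, and
that edge is a chord.
-/

/-- The labeling `1, …, n` is a perfect elimination ordering of `Δ`: for every
`(d-1)`-element set `σ` and vertices `σ < i < j < k`, if `σ ∪ {i,k}` and `σ ∪ {j,k}`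
are facets of `Δ` then so is `σ ∪ {i,j}`. -/
def IsPEOComplex {n : ℕ} (d : ℕ) (Δ : Finset (Finset (Fin n))) : Prop :=
  ∀ (σ : Finset (Fin n)) (i j k : Fin n), σ.card = d - 1 →
    (∀ x ∈ σ, x < i) → i < j → j < k →
    insert i (insert k σ) ∈ Δ → insert j (insert k σ) ∈ Δ → insert i (insert j σ) ∈ Δ

/-- The link graph of `σ` in `Δ`: vertices not in `σ` are joined by an edge whenever
`σ ∪ {i, j}` is a face of `Δ` (i.e. is contained in some facet).  Vertices of `σ` are
isolated. -/
def linkGraph {n : ℕ} (Δ : Finset (Finset (Fin n))) (σ : Finset (Fin n)) :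
    SimpleGraph (Fin n) :=
  SimpleGraph.fromRel
    (fun i j => i ∉ σ ∧ j ∉ σ ∧ ∃ φ ∈ Δ, insert i (insert j σ) ⊆ φ)

/-- A graph is chordal if every cycle of length at least 4 has a chord: an edge of the
graph between two vertices of the cycle that is not an edge of the cycle. -/
def IsChordal {V : Type*} (G : SimpleGraph V) : Prop :=
  ∀ (v : V) (c : G.Walk v v), c.IsCycle → 4 ≤ c.length →
    ∃ u w, u ∈ c.support ∧ w ∈ c.support ∧ G.Adj u w ∧ s(u, w) ∉ c.edges

namespace SimpleGraph

variable {V : Type*} {G : SimpleGraph V}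

theorem Walk.IsCycle.snd_penultimate_notMem_edges {u : V} {c : G.Walk u u} (hc : c.IsCycle)
    (hlen : 4 ≤ c.length) : s(c.snd, c.penultimate) ∉ c.edges := by
  intro hmem
  have hpen_ne_u : c.penultimate ≠ u := fun h => by
    have := (hc.getVert_endpoint_iff (i := c.length - 1) (by omega)).mp h
    omega
  have hedges : c.edges = s(u, c.snd) :: c.tail.edges := by
    conv_lhs => rw [← c.cons_tail_eq hc.not_nil]
    rfl
  rw [hedges, List.mem_cons] at hmem
  rcases hmem with h | h
  · rcases Sym2.eq_iff.mp h with ⟨-, h⟩ | ⟨-, h⟩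
    · exact hc.snd_ne_penultimate h.symm
    · exact hpen_ne_u h
  · have h2 : c.penultimate = c.getVert 2 := by
      simpa using hc.isPath_tail.eq_snd_of_mem_edges h
    have := hc.getVert_injOn (by simp; omega) (by simp; omega) h2
    omega

def IsPerfectEliminationOrder [LinearOrder V] (G : SimpleGraph V) : Prop :=
  ∀ ⦃i j k : V⦄, i < j → j < k → G.Adj i k → G.Adj j k → G.Adj i j

theorem IsPerfectEliminationOrder.isChordal [LinearOrder V] (hG : G.IsPerfectEliminationOrder) :
    IsChordal G := by
  intro v c hc hlen
  obtain ⟨k, hk, hmax⟩ := c.support.toFinset.exists_max_image id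
    ⟨v, List.mem_toFinset.mpr c.start_mem_support⟩
  rw [List.mem_toFinset] at hk
  set c' := c.rotate k hk
  have hc' : c'.IsCycle := hc.rotate hk
  have hsupp : ∀ {x}, x ∈ c'.support → x ∈ c.support := (c.mem_support_rotate_iff k hk).mp
  have hlt : ∀ {x}, x ∈ c'.support → G.Adj k x → x < k := fun hx hadj =>
    (hmax _ (List.mem_toFinset.mpr (hsupp hx))).lt_of_ne hadj.ne'
  have hka : G.Adj k c'.snd := c'.adj_snd hc'.not_nil
  have hkb : G.Adj k c'.penultimate := (c'.adj_penultimate hc'.not_nil).symm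
  have ha := hlt (c'.getVert_mem_support 1) hka
  have hb := hlt (c'.getVert_mem_support _) hkb
  have hab : G.Adj c'.snd c'.penultimate := by
    rcases (hc'.snd_ne_penultimate).lt_or_gt with h | h
    · exact hG h hb hka.symm hkb.symm
    · exact (hG h ha hkb.symm hka.symm).symm
  refine ⟨_, _, hsupp (c'.getVert_mem_support 1), hsupp (c'.getVert_mem_support _), hab,
    fun hmem => hc'.snd_penultimate_notMem_edges (by simpa [c'] using hlen) ?_⟩
  exact (c.rotate_edges k hk).mem_iff.mpr hmem

end SimpleGraph

namespace Finset

variable {α : Type*} [LinearOrder α]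

theorem toColex_insert_erase_lt {s : Finset α} {a i : α} (ha : a ∈ s) (hi : i ∉ s)
    (hia : i < a) : toColex (insert i (s.erase a)) < toColex s := by
  refine Colex.toColex_lt_toColex_iff_exists_forall_lt.mpr ⟨a, ha, ?_, fun b hb hbs => ?_⟩
  · simp [hia.ne']
  · obtain rfl | hb := mem_insert.mp hb
    · exact hia
    · exact absurd (mem_of_mem_erase hb) hbs

/-- Otherwise exchanging `i` for a larger element of `σ` would give a colex-smaller set. -/
theorem forall_lt_of_isMin_toColex {P : Finset α → Prop} (hP : ∀ ⦃s t⦄, s ⊆ t → P t → P s)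
    {σ : Finset α} (hmin : ∀ τ, τ.card = σ.card → P τ → toColex σ ≤ toColex τ) {i : α}
    (hi : i ∉ σ) (hPi : P (insert i σ)) : ∀ x ∈ σ, x < i := by
  intro x hx
  by_contra! hxi
  have hix : i < x := hxi.lt_of_ne fun h => hi (h ▸ hx)
  have hcard : (insert i (σ.erase x)).card = σ.card := by
    rw [card_insert_of_notMem fun h => hi (mem_of_mem_erase h), card_erase_add_one hx]
  have hsub : insert i (σ.erase x) ⊆ insert i σ := insert_subset_insert _ (erase_subset _ _)
  exact (hmin _ hcard (hP hsub hPi)).not_gt (toColex_insert_erase_lt hx hi hix)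

end Finset

section LinkGraph

open Finset

variable {n d : ℕ} {Δ : Finset (Finset (Fin n))} {σ : Finset (Fin n)}

theorem linkGraph_adj {i j : Fin n} : (linkGraph Δ σ).Adj i j ↔
    i ≠ j ∧ i ∉ σ ∧ j ∉ σ ∧ ∃ φ ∈ Δ, insert i (insert j σ) ⊆ φ := by
  rw [linkGraph, SimpleGraph.fromRel_adj, insert_comm j i]
  tauto

theorem mem_of_subset_of_card_eq (hpure : ∀ φ ∈ Δ, φ.card = d + 1) {τ φ : Finset (Fin n)}
    (hφ : φ ∈ Δ) (hτφ : τ ⊆ φ) (hτ : τ.card = d + 1) : τ ∈ Δ := by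
  rwa [eq_of_subset_of_card_le hτφ (by rw [hpure φ hφ, hτ])]

theorem linkGraph_adj_iff_mem (hpure : ∀ φ ∈ Δ, φ.card = d + 1) (hσ : σ.card + 1 = d)
    {i j : Fin n} : (linkGraph Δ σ).Adj i j ↔
      i ≠ j ∧ i ∉ σ ∧ j ∉ σ ∧ insert i (insert j σ) ∈ Δ := by
  rw [linkGraph_adj]
  refine and_congr_right fun hij => and_congr_right fun hi => and_congr_right fun hj =>
    ⟨fun ⟨φ, hφ, hsub⟩ => mem_of_subset_of_card_eq hpure hφ hsub ?_, fun h => ⟨_, h, subset_rfl⟩⟩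
  rw [card_insert_of_notMem (by simp [hij, hi]), card_insert_of_notMem hj]
  omega

theorem isPerfectEliminationOrder_linkGraph (hd : 1 ≤ d) (hpure : ∀ φ ∈ Δ, φ.card = d + 1)
    (hpeo : IsPEOComplex d Δ) (hσ : σ.card = d - 1)
    (hlow : ∀ i j, (linkGraph Δ σ).Adj i j → ∀ x ∈ σ, x < i) :
    (linkGraph Δ σ).IsPerfectEliminationOrder := by
  intro i j k hij hjk hik hjk'
  have hlow_i := hlow i k hik
  rw [linkGraph_adj_iff_mem hpure (by omega)] at hik hjk' ⊢
  exact ⟨hij.ne, hik.2.1, hjk'.2.1, hpeo σ i j k hσ hlow_i hij hjk hik.2.2.2 hjk'.2.2.2⟩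

end LinkGraph

theorem stmt_11 {n : ℕ} (d : ℕ) (hd : 1 ≤ d) (Δ : Finset (Finset (Fin n)))
    (hne : Δ.Nonempty) (hpure : ∀ φ ∈ Δ, φ.card = d + 1) (hpeo : IsPEOComplex d Δ) :
    ∃ σ : Finset (Fin n), σ.card = d - 1 ∧ (∃ φ ∈ Δ, σ ⊆ φ) ∧
      IsChordal (linkGraph Δ σ) := by
  classical
  set ridges := (Finset.univ.powersetCard (d - 1)).filter fun σ => ∃ φ ∈ Δ, σ ⊆ φ
  have hridges : ridges.Nonempty := by
    obtain ⟨φ, hφ⟩ := hne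
    obtain ⟨σ, hσφ, hσ⟩ :=
      Finset.exists_subset_card_eq (s := φ) (n := d - 1) (by rw [hpure φ hφ]; omega)
    exact ⟨σ, by simpa [ridges, hσ] using ⟨φ, hφ, hσφ⟩⟩
  obtain ⟨σ, hσ, hmin⟩ := ridges.exists_min_image toColex hridges
  simp only [ridges, Finset.mem_filter, Finset.mem_powersetCard, Finset.subset_univ,
    true_and] at hσ hmin
  obtain ⟨hcard, hface⟩ := hσ
  refine ⟨σ, hcard, hface, SimpleGraph.IsPerfectEliminationOrder.isChordal ?_⟩
  refine isPerfectEliminationOrder_linkGraph hd hpure hpeo hcard fun i j hij => ?_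
  obtain ⟨-, hi, -, φ, hφ, hsub⟩ := linkGraph_adj.mp hij
  refine Finset.forall_lt_of_isMin_toColex (P := fun τ => ∃ φ ∈ Δ, τ ⊆ φ)
    (fun s t hst ⟨φ, hφ, ht⟩ => ⟨φ, hφ, hst.trans ht⟩)
    (fun τ hτ hτP => hmin τ ⟨hτ.trans hcard, hτP⟩) hi
    ⟨φ, hφ, (Finset.insert_subset_insert _ (Finset.subset_insert _ _)).trans hsub⟩
end

section
/- Let G be a finite simple graph with vertex set [n] = {1,...,n}, with edges ordered lexicographically. If G contains a 3-cycle, then there exists a 2-edge tight spanning forest of G that is not an NBC set; consequently the set of 2-edge tight spanning forests of G differs from the set of 2-edge NBC sets of G. -/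
open Classical

/-- A list of elements of a linear order is *tight* if it contains no three-term
subsequence order-isomorphic to 231, 312 or 321. -/
def TightList {α : Type*} [LinearOrder α] (l : List α) : Prop :=
  ∀ a b c : α, [a, b, c].Sublist l →
    ¬(c < a ∧ a < b) ∧ ¬(b < c ∧ c < a) ∧ ¬(c < b ∧ b < a)

/-- A simple graph on a linearly ordered vertex type is a *tight forest*. -/
def IsTightForest {V : Type*} [LinearOrder V] (F : SimpleGraph V) : Prop :=
  F.IsAcyclic ∧ ∀ (r v : V), (∀ w, F.Reachable r w → r ≤ w) →
    ∀ p : F.Walk r v, p.IsPath → TightList p.support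

/-- `F` is a tight spanning forest of `G`. -/
def IsTSF {n : ℕ} (G : SimpleGraph (Fin n)) (F : Finset (Sym2 (Fin n))) : Prop :=
  (F : Set (Sym2 (Fin n))) ⊆ G.edgeSet ∧
    IsTightForest (SimpleGraph.fromEdgeSet (F : Set (Sym2 (Fin n))))

/-- Lexicographic order on edges, writing each edge with its smaller endpoint first. -/
def edgeLE {n : ℕ} (e f : Sym2 (Fin n)) : Prop :=
  Sym2.inf e < Sym2.inf f ∨ (Sym2.inf e = Sym2.inf f ∧ Sym2.sup e ≤ Sym2.sup f)

/-- `B` is a broken circuit of `G`. -/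
def IsBrokenCircuit {n : ℕ} (G : SimpleGraph (Fin n)) (B : Finset (Sym2 (Fin n))) : Prop :=
  ∃ (v : Fin n) (c : G.Walk v v) (e : Sym2 (Fin n)), c.IsCycle ∧ e ∈ c.edges ∧
    (∀ f ∈ c.edges, edgeLE e f) ∧ B = c.edges.toFinset.erase e

/-- `N` is an NBC set of `G`: a set of edges of `G` containing no broken circuit. -/
def IsNBC {n : ℕ} (G : SimpleGraph (Fin n)) (N : Finset (Sym2 (Fin n))) : Prop :=
  (N : Set (Sym2 (Fin n))) ⊆ G.edgeSet ∧
    ∀ B : Finset (Sym2 (Fin n)), IsBrokenCircuit G B → ¬ B ⊆ N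

section Helpers

open SimpleGraph

private lemma trail_len {V : Type*} {H : SimpleGraph V} {e1 e2 : Sym2 V}
    (hE : H.edgeSet ⊆ {e1, e2}) {u v : V} (p : H.Walk u v) (hp : p.IsTrail) :
    p.length ≤ 2 := by
  classical
  have hnd : p.edges.Nodup := hp.edges_nodup
  have hsub : p.edges.toFinset ⊆ ({e1, e2} : Finset (Sym2 V)) := by
    intro e he
    have := hE (p.edges_subset_edgeSet (List.mem_toFinset.mp he))
    simpa using this
  have h1 : p.edges.toFinset.card ≤ 2 := le_trans (Finset.card_le_card hsub)
    ((Finset.card_insert_le _ _).trans (by simp))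
  have h2 : p.edges.length = p.edges.toFinset.card := (List.toFinset_card_of_nodup hnd).symm
  have := p.length_edges
  omega

private lemma acyclic_two {V : Type*} {H : SimpleGraph V} {e1 e2 : Sym2 V}
    (hE : H.edgeSet ⊆ {e1, e2}) : H.IsAcyclic := by
  intro v c hc
  have h3 := hc.three_le_length
  have h2 := trail_len hE c hc.isTrail
  omega

private lemma tight_two {V : Type*} [LinearOrder V] {H : SimpleGraph V} {e1 e2 : Sym2 V}
    (hE : H.edgeSet ⊆ {e1, e2}) : IsTightForest H := by
  refine ⟨acyclic_two hE, ?_⟩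
  intro r v hr p hp x y z hsub
  have hlen : p.support.length ≤ 3 := by
    have := trail_len hE p hp.isTrail
    have := p.length_support
    omega
  have hle : 3 ≤ p.support.length := by simpa using hsub.length_le
  have heq : [x, y, z] = p.support := hsub.eq_of_length (by
    simp only [List.length_cons, List.length_nil]; omega)
  have hx : x = r := by
    have := p.support_eq_cons
    rw [← heq] at this
    exact (List.cons.injEq _ _ _ _ ▸ this).1
  have hreach : ∀ w ∈ p.support, r ≤ w := fun w hw => hr w ⟨p.takeUntil w hw⟩
  have hy : y ∈ p.support := hsub.subset (by simp)
  have hz : z ∈ p.support := hsub.subset (by simp)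
  have hnd : p.support.Nodup := hp.support_nodup
  rw [← heq] at hnd
  simp only [List.nodup_cons, List.mem_cons] at hnd
  have hry : r < y := lt_of_le_of_ne (hreach y hy) (by subst hx; tauto)
  have hrz : r < z := lt_of_le_of_ne (hreach z hz) (by subst hx; tauto)
  subst hx
  exact ⟨fun h => absurd h.1 (not_lt.2 hrz.le),
    fun h => absurd h.2 (not_lt.2 hrz.le),
    fun h => absurd h.2 (not_lt.2 hry.le)⟩

private lemma key {n : ℕ} (G : SimpleGraph (Fin n)) (a b c : Fin n) (hab : a < b) (hbc : b < c)
    (h1 : G.Adj a b) (h2 : G.Adj b c) (h3 : G.Adj a c) :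
    ∃ F : Finset (Sym2 (Fin n)), IsTSF G F ∧ F.card = 2 ∧ ¬ IsNBC G F := by
  classical
  have hac : a < c := hab.trans hbc
  have nab : a ≠ b := hab.ne
  have nbc : b ≠ c := hbc.ne
  have nac : a ≠ c := hac.ne
  refine ⟨{s(a,c), s(b,c)}, ⟨?_, ?_⟩, ?_, ?_⟩
  · intro e he
    simp only [Finset.coe_insert, Finset.coe_singleton, Set.mem_insert_iff,
      Set.mem_singleton_iff] at he
    rcases he with rfl | rfl
    · exact h3
    · exact h2
  · refine tight_two (e1 := s(a,c)) (e2 := s(b,c)) ?_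
    rw [SimpleGraph.edgeSet_fromEdgeSet]
    intro e he
    simpa using he.1
  · rw [Finset.card_insert_of_notMem (by simp [Sym2.eq_iff]; tauto), Finset.card_singleton]
  · rintro ⟨-, hN⟩
    set w : G.Walk a a := SimpleGraph.Walk.cons h1 (SimpleGraph.Walk.cons h2
      (SimpleGraph.Walk.cons h3.symm SimpleGraph.Walk.nil)) with hw
    have hedges : w.edges = [s(a,b), s(b,c), s(c,a)] := by simp [hw]
    have hcyc : w.IsCycle := by
      rw [SimpleGraph.Walk.isCycle_def]
      refine ⟨?_, by simp [hw], ?_⟩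
      · rw [SimpleGraph.Walk.isTrail_def, hedges]
        simp [Sym2.eq_iff]
        tauto
      · simp [hw]
        tauto
    refine hN {s(a,c), s(b,c)} ⟨a, w, s(a,b), hcyc, by rw [hedges]; simp, ?_, ?_⟩ subset_rfl
    · intro f hf
      rw [hedges] at hf
      simp only [List.mem_cons, List.not_mem_nil, or_false] at hf
      rcases hf with rfl | rfl | rfl
      · right; exact ⟨rfl, le_refl _⟩
      · left
        simp only [Sym2.inf_mk]
        rw [inf_eq_left.mpr hab.le, inf_eq_left.mpr hbc.le]
        exact hab
      · right
        simp only [Sym2.inf_mk, Sym2.sup_mk]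
        constructor
        · rw [inf_eq_left.mpr hab.le, inf_comm, inf_eq_left.mpr hac.le]
        · rw [sup_eq_right.mpr hab.le, sup_comm, sup_eq_right.mpr hac.le]
          exact hbc.le
    · have hswap : s(c,a) = s(a,c) := Sym2.eq_swap
      have hnm : s(a,b) ∉ ({s(b,c), s(a,c)} : Finset (Sym2 (Fin n))) := by
        simp [Sym2.eq_iff]; tauto
      rw [hedges]
      have hts : ([s(a,b), s(b,c), s(c,a)] : List (Sym2 (Fin n))).toFinset
          = insert s(a,b) {s(b,c), s(a,c)} := by
        simp [hswap]
      rw [hts, Finset.erase_insert hnm]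
      exact Finset.pair_comm _ _

end Helpers

theorem stmt_15 {n : ℕ} (G : SimpleGraph (Fin n))
    (h3 : ∃ i j k : Fin n, G.Adj i j ∧ G.Adj j k ∧ G.Adj i k) :
    (∃ F : Finset (Sym2 (Fin n)), IsTSF G F ∧ F.card = 2 ∧ ¬ IsNBC G F) ∧
    {F : Finset (Sym2 (Fin n)) | IsTSF G F ∧ F.card = 2} ≠
      {F : Finset (Sym2 (Fin n)) | IsNBC G F ∧ F.card = 2} := by
  obtain ⟨i, j, k, hij, hjk, hik⟩ := h3
  have hmain : ∃ F : Finset (Sym2 (Fin n)), IsTSF G F ∧ F.card = 2 ∧ ¬ IsNBC G F := by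
    rcases lt_trichotomy i j with h1 | h1 | h1
    · rcases lt_trichotomy j k with h2 | h2 | h2
      · exact key G i j k h1 h2 hij hjk hik
      · exact absurd h2 hjk.ne
      · rcases lt_trichotomy i k with h4 | h4 | h4
        · exact key G i k j h4 h2 hik hjk.symm hij
        · exact absurd h4 hik.ne
        · exact key G k i j h4 h1 hik.symm hij hjk.symm
    · exact absurd h1 hij.ne
    · rcases lt_trichotomy i k with h2 | h2 | h2
      · exact key G j i k h1 h2 hij.symm hik hjk
      · exact absurd h2 hik.ne
      · rcases lt_trichotomy j k with h4 | h4 | h4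
        · exact key G j k i h4 h2 hjk hik.symm hij.symm
        · exact absurd h4 hjk.ne
        · exact key G k j i h4 h1 hjk.symm hij.symm hik.symm
  refine ⟨hmain, ?_⟩
  obtain ⟨F, hTSF, hcard, hNBC⟩ := hmain
  intro hset
  have hmem : F ∈ {F : Finset (Sym2 (Fin n)) | IsTSF G F ∧ F.card = 2} := ⟨hTSF, hcard⟩
  rw [hset] at hmem
  exact hNBC hmem.1
end
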